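/- arXiv:2508.02654 — 2 statements merged into one kernel-verified Lean document; each statement's English description precedes it below -/
import Mathlib

section
/- Let η, β, γ, k > 0 and 0 < λ₁ ≤ λ_j ≤ λ_N be real numbers, and define ω₀ = 2ηλ₁ + βγ + (λ₁²η²)/(k + η(λ_N − λ₁)). Then for every ε > 0 and every ω with ω + ε < ω₀, one has for all j with λ₁ ≤ λ_j ≤ λ_N: [−(ηλ_j + βγ − ω)(k + ηλ_j) − (ω + k − βγ)λ₁η]/(k + (λ_j − λ₁)η) + ε < 0. -/
theorem spectral_coefficient_negative
    (η β γ k lam1 lamj lamN : ℝ)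
    (hη : 0 < η) (hβ : 0 < β) (hγ : 0 < γ) (hk : 0 < k)
    (h1 : 0 < lam1)
    (ε ω : ℝ) (hε : 0 < ε)
    (hω : ω + ε < 2 * η * lam1 + β * γ + (lam1 ^ 2 * η ^ 2) / (k + η * (lamN - lam1)))
    (hj1 : lam1 ≤ lamj) (hjN : lamj ≤ lamN) :
    (-(η * lamj + β * γ - ω) * (k + η * lamj) - (ω + k - β * γ) * lam1 * η) /
      (k + (lamj - lam1) * η) + ε < 0 := by
  have hD : 0 < k + (lamj - lam1) * η := by nlinarith
  have hDN : 0 < k + η * (lamN - lam1) := by nlinarith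
  set Q := (lam1 ^ 2 * η ^ 2) / (k + η * (lamN - lam1)) with hQdef
  have hQ : 0 ≤ Q := div_nonneg (by positivity) hDN.le
  have hQmul : Q * (k + η * (lamN - lam1)) = lam1 ^ 2 * η ^ 2 :=
    div_mul_cancel₀ _ hDN.ne'
  rw [← sub_neg_eq_add, sub_lt_iff_lt_add, zero_add, div_lt_iff₀ hD]
  have hDle : k + (lamj - lam1) * η ≤ k + η * (lamN - lam1) := by nlinarith
  have h2 : ω + ε - η * lamj - η * lam1 - β * γ < Q := by nlinarith
  have h3 := mul_lt_mul_of_pos_right h2 hD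
  nlinarith [h3, mul_le_mul_of_nonneg_left hDle hQ, hQmul]
end

section
/- (Nonlinear Gronwall inequality) Let ζ : [t₀,∞) → [0,∞) be continuous, C ≥ 0, 0 ≤ ϑ < 1, and a, b locally integrable non-negative functions on [t₀,∞) such that ζ(t) ≤ C + ∫_{t₀}^t (a(s)ζ(s) + b(s)ζ(s)^ϑ) ds for all t ≥ t₀. Then ζ(t) ≤ { C^{1−ϑ} exp[(1−ϑ)∫_{t₀}^t a(s)ds] + (1−ϑ)∫_{t₀}^t b(s) exp[(1−ϑ)∫_s^t a(r)dr] ds }^{1/(1−ϑ)} for all t ≥ t₀. -/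
/-!
For `C > 0` put `V t = C + ∫ s in t₀..t, (a s * ζ s + b s * ζ s ^ ϑ)`. Then `V` is absolutely
continuous and positive, `ζ ≤ V`, and `V' ≤ a V + b V ^ ϑ` almost everywhere. The Bernoulli
substitution `W = V ^ (1 - ϑ)` linearizes this to `W' ≤ (1 - ϑ) (a W + b)`, and the linear
Gronwall inequality for absolutely continuous functions (the function
`∫ β e^{-A} - e^{-A} W`, with `A' = α`, has nonnegative derivative a.e.) bounds `W`, hence
`ζ ^ (1 - ϑ)`. The case `C = 0` follows by letting `C` decrease to `0`.
-/

open MeasureTheory intervalIntegral Set Filter Topology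

theorem LipschitzOnWith.comp_absolutelyContinuousOnInterval {X Y : Type*} [PseudoMetricSpace X]
    [PseudoMetricSpace Y] {g : X → Y} {f : ℝ → X} {s : Set X} {K : NNReal} {a b : ℝ}
    (hg : LipschitzOnWith K g s) (hf : AbsolutelyContinuousOnInterval f a b)
    (hfs : MapsTo f (uIcc a b) s) : AbsolutelyContinuousOnInterval (g ∘ f) a b := by
  have hKf := Tendsto.const_mul (K : ℝ) hf
  rw [mul_zero] at hKf
  refine squeeze_zero' (Eventually.of_forall fun _ ↦ Finset.sum_nonneg fun _ _ ↦ dist_nonneg)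
    ?_ hKf
  rw [eventually_inf_principal]
  filter_upwards with E hE
  rw [Finset.mul_sum]
  gcongr with i hi
  exact hg.dist_le_mul _ (hfs (hE.1 i hi).1) _ (hfs (hE.1 i hi).2)

theorem LocallyLipschitzOn.comp_absolutelyContinuousOnInterval {X Y : Type*}
    [SeminormedAddCommGroup X] [PseudoMetricSpace Y] {g : X → Y} {f : ℝ → X} {s : Set X}
    {a b : ℝ}
    (hg : LocallyLipschitzOn s g) (hf : AbsolutelyContinuousOnInterval f a b)
    (hfs : MapsTo f (uIcc a b) s) : AbsolutelyContinuousOnInterval (g ∘ f) a b := by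
  have hcpt : IsCompact (f '' uIcc a b) := isCompact_uIcc.image_of_continuousOn hf.continuousOn
  obtain ⟨K, hK⟩ := LocallyLipschitzOn.exists_lipschitzOnWith_of_compact hcpt
    (hg.mono hfs.image_subset)
  exact hK.comp_absolutelyContinuousOnInterval hf (mapsTo_image f _)

theorem AbsolutelyContinuousOnInterval.le_of_ae_deriv_nonneg {f : ℝ → ℝ} {a b : ℝ}
    (hf : AbsolutelyContinuousOnInterval f a b) (hab : a ≤ b)
    (hderiv : ∀ᵐ x, x ∈ Icc a b → 0 ≤ deriv f x) : f a ≤ f b := by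
  have hint : 0 ≤ ∫ x in a..b, deriv f x :=
    integral_nonneg_of_ae_restrict hab ((ae_restrict_iff' measurableSet_Icc).2 hderiv)
  linarith [hf.integral_deriv_eq_sub]

theorem AbsolutelyContinuousOnInterval.le_of_deriv_le_mul_add {W α β : ℝ → ℝ} {t₀ T : ℝ}
    (hT : t₀ ≤ T) (hW : AbsolutelyContinuousOnInterval W t₀ T)
    (hα : IntervalIntegrable α volume t₀ T) (hβ : IntervalIntegrable β volume t₀ T)
    (hderiv : ∀ᵐ x, x ∈ Icc t₀ T → deriv W x ≤ α x * W x + β x) :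
    W T ≤ W t₀ * Real.exp (∫ s in t₀..T, α s) +
      ∫ s in t₀..T, β s * Real.exp (∫ r in s..T, α r) := by
  set A : ℝ → ℝ := fun t ↦ ∫ s in t₀..t, α s
  have hA_ac : AbsolutelyContinuousOnInterval A t₀ T :=
    hα.absolutelyContinuousOnInterval_intervalIntegral left_mem_uIcc
  have hexp : LocallyLipschitzOn univ Real.exp :=
    Real.contDiff_exp.locallyLipschitz.locallyLipschitzOn
  have hE_ac : AbsolutelyContinuousOnInterval (fun t ↦ Real.exp (-A t)) t₀ T :=
    hexp.comp_absolutelyContinuousOnInterval hA_ac.fun_neg (mapsTo_univ _ _)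
  have hβE : IntervalIntegrable (fun s ↦ β s * Real.exp (-A s)) volume t₀ T :=
    hβ.mul_continuousOn hE_ac.continuousOn
  set J : ℝ → ℝ := fun t ↦ ∫ s in t₀..t, β s * Real.exp (-A s)
  set Y : ℝ → ℝ := fun t ↦ J t - Real.exp (-A t) * W t
  have hY_ac : AbsolutelyContinuousOnInterval Y t₀ T :=
    (hβE.absolutelyContinuousOnInterval_intervalIntegral left_mem_uIcc).fun_sub (hE_ac.fun_mul hW)
  have hY_deriv : ∀ᵐ x, x ∈ Icc t₀ T → 0 ≤ deriv Y x := by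
    filter_upwards [hW.ae_differentiableAt, hα.ae_hasDerivAt_integral,
      hβE.ae_hasDerivAt_integral, hderiv] with x hWx hAx hJx hx hmem
    have hmem' : x ∈ uIcc t₀ T := uIcc_of_le hT ▸ hmem
    have hAx' : HasDerivAt A (α x) x := hAx hmem' t₀ left_mem_uIcc
    have hYx : HasDerivAt Y (Real.exp (-A x) * (α x * W x + β x - deriv W x)) x :=
      ((hJx hmem' t₀ left_mem_uIcc).sub (hAx'.neg.exp.mul (hWx hmem').hasDerivAt)).congr_deriv
        (by simp only [Pi.neg_apply]; ring)
    rw [hYx.deriv]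
    exact mul_nonneg (Real.exp_pos _).le (sub_nonneg.2 (hx hmem))
  have hYT : 0 ≤ Y T + W t₀ := by
    have hY0 : Y t₀ = -W t₀ := by simp [Y, J, A]
    linarith [hY_ac.le_of_ae_deriv_nonneg hT hY_deriv]
  have hJT : J T * Real.exp (A T) = ∫ s in t₀..T, β s * Real.exp (∫ r in s..T, α r) := by
    rw [← intervalIntegral.integral_mul_const]
    refine intervalIntegral.integral_congr fun s hs ↦ ?_
    have hsub : ∫ r in s..T, α r = A T - A s :=
      (integral_interval_sub_left hα (hα.mono_set (uIcc_subset_uIcc_left hs))).symm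
    simp only [hsub, sub_eq_neg_add, Real.exp_add, mul_assoc]
  calc W T = Real.exp (A T) * (Real.exp (-A T) * W T) := by
        rw [← mul_assoc, ← Real.exp_add, add_neg_cancel, Real.exp_zero, one_mul]
    _ ≤ Real.exp (A T) * (W t₀ + J T) := by gcongr; linarith
    _ = _ := by rw [← hJT]; ring

theorem AbsolutelyContinuousOnInterval.rpow_const {V : ℝ → ℝ} {a b : ℝ}
    (hV : AbsolutelyContinuousOnInterval V a b) (hpos : ∀ t ∈ uIcc a b, 0 < V t) (p : ℝ) :
    AbsolutelyContinuousOnInterval (fun t ↦ V t ^ p) a b := by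
  have hrpow : ContDiffOn ℝ 1 (fun x : ℝ ↦ x ^ p) (Ioi 0) := fun x hx ↦
    (Real.contDiffAt_rpow_const_of_ne (ne_of_gt hx)).contDiffWithinAt
  exact (hrpow.locallyLipschitzOn (convex_Ioi 0)).comp_absolutelyContinuousOnInterval hV hpos

theorem AbsolutelyContinuousOnInterval.rpow_le_of_deriv_le {V a b : ℝ → ℝ} {t₀ T ϑ : ℝ}
    (hT : t₀ ≤ T) (hϑ : ϑ ≤ 1) (hV : AbsolutelyContinuousOnInterval V t₀ T)
    (hpos : ∀ t ∈ Icc t₀ T, 0 < V t)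
    (ha : IntervalIntegrable a volume t₀ T) (hb : IntervalIntegrable b volume t₀ T)
    (hderiv : ∀ᵐ x, x ∈ Icc t₀ T → deriv V x ≤ a x * V x + b x * V x ^ ϑ) :
    V T ^ (1 - ϑ) ≤ V t₀ ^ (1 - ϑ) * Real.exp ((1 - ϑ) * ∫ s in t₀..T, a s) +
      (1 - ϑ) * ∫ s in t₀..T, b s * Real.exp ((1 - ϑ) * ∫ r in s..T, a r) := by
  set c := 1 - ϑ
  have hc : 0 ≤ c := sub_nonneg.2 hϑ
  have hW : AbsolutelyContinuousOnInterval (fun t ↦ V t ^ c) t₀ T :=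
    hV.rpow_const (uIcc_of_le hT ▸ hpos) c
  have hWderiv : ∀ᵐ x, x ∈ Icc t₀ T →
      deriv (fun t ↦ V t ^ c) x ≤ c * a x * V x ^ c + c * b x := by
    filter_upwards [hV.ae_differentiableAt, hderiv] with x hVx hx hmem
    have hVpos := hpos x hmem
    have hpow : V x ^ (c - 1) * (a x * V x + b x * V x ^ ϑ) = a x * V x ^ c + b x := by
      have h1 : V x ^ (c - 1) * V x = V x ^ c := by
        rw [← Real.rpow_add_one hVpos.ne', sub_add_cancel]
      have h2 : V x ^ (c - 1) * V x ^ ϑ = 1 := by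
        rw [← Real.rpow_add hVpos, show c - 1 + ϑ = 0 by ring, Real.rpow_zero]
      linear_combination a x * h1 + b x * h2
    rw [((hVx (uIcc_of_le hT ▸ hmem)).hasDerivAt.rpow_const (Or.inl hVpos.ne')).deriv]
    calc deriv V x * c * V x ^ (c - 1)
        ≤ (a x * V x + b x * V x ^ ϑ) * c * V x ^ (c - 1) := by
          gcongr
          exact hx hmem
      _ = c * a x * V x ^ c + c * b x := by linear_combination c * hpow
  have := hW.le_of_deriv_le_mul_add hT (ha.const_mul c) (hb.const_mul c) hWderiv
  simpa only [intervalIntegral.integral_const_mul, mul_assoc] using this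

theorem rpow_le_of_le_add_integral {ζ a b : ℝ → ℝ} {t₀ T K ϑ : ℝ} (hT : t₀ ≤ T)
    (hK : 0 < K) (hϑ0 : 0 ≤ ϑ) (hϑ1 : ϑ ≤ 1) (hζ : ContinuousOn ζ (Icc t₀ T))
    (hζ0 : ∀ t ∈ Icc t₀ T, 0 ≤ ζ t) (ha0 : ∀ t ∈ Icc t₀ T, 0 ≤ a t)
    (hb0 : ∀ t ∈ Icc t₀ T, 0 ≤ b t)
    (ha : IntervalIntegrable a volume t₀ T) (hb : IntervalIntegrable b volume t₀ T)
    (hineq : ∀ t ∈ Icc t₀ T, ζ t ≤ K + ∫ s in t₀..t, (a s * ζ s + b s * ζ s ^ ϑ)) :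
    ζ T ^ (1 - ϑ) ≤ K ^ (1 - ϑ) * Real.exp ((1 - ϑ) * ∫ s in t₀..T, a s) +
      (1 - ϑ) * ∫ s in t₀..T, b s * Real.exp ((1 - ϑ) * ∫ r in s..T, a r) := by
  set g : ℝ → ℝ := fun s ↦ a s * ζ s + b s * ζ s ^ ϑ
  set V : ℝ → ℝ := fun t ↦ K + ∫ s in t₀..t, g s
  rw [← uIcc_of_le hT] at hζ
  have hg : IntervalIntegrable g volume t₀ T :=
    (ha.mul_continuousOn hζ).add (hb.mul_continuousOn (hζ.rpow_const fun _ _ ↦ Or.inr hϑ0))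
  have hV : AbsolutelyContinuousOnInterval V t₀ T :=
    (contDiffOn_const (c := K)).absolutelyContinuousOnInterval.fun_add
      (hg.absolutelyContinuousOnInterval_intervalIntegral left_mem_uIcc)
  have hg0 : ∀ s ∈ Icc t₀ T, 0 ≤ g s := fun s hs ↦
    add_nonneg (mul_nonneg (ha0 s hs) (hζ0 s hs))
      (mul_nonneg (hb0 s hs) (Real.rpow_nonneg (hζ0 s hs) ϑ))
  have hVpos : ∀ t ∈ Icc t₀ T, 0 < V t := fun t ht ↦
    add_pos_of_pos_of_nonneg hK
      (intervalIntegral.integral_nonneg ht.1 fun s hs ↦ hg0 s ⟨hs.1, hs.2.trans ht.2⟩)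
  have hderiv : ∀ᵐ x, x ∈ Icc t₀ T → deriv V x ≤ a x * V x + b x * V x ^ ϑ := by
    filter_upwards [hg.ae_hasDerivAt_integral] with x hx hmem
    rw [((hx (uIcc_of_le hT ▸ hmem) t₀ left_mem_uIcc).const_add K).deriv]
    exact add_le_add (mul_le_mul_of_nonneg_left (hineq x hmem) (ha0 x hmem))
      (mul_le_mul_of_nonneg_left
        (Real.rpow_le_rpow (hζ0 x hmem) (hineq x hmem) hϑ0) (hb0 x hmem))
  have hVt₀ : V t₀ = K := by simp [V]
  calc ζ T ^ (1 - ϑ) ≤ V T ^ (1 - ϑ) :=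
        Real.rpow_le_rpow (hζ0 T (right_mem_Icc.2 hT)) (hineq T (right_mem_Icc.2 hT))
          (sub_nonneg.2 hϑ1)
    _ ≤ _ := hVt₀ ▸ hV.rpow_le_of_deriv_le hT hϑ1 hVpos ha hb hderiv

theorem nonlinear_gronwall (t₀ : ℝ) (ζ a b : ℝ → ℝ) (C ϑ : ℝ)
    (hC : 0 ≤ C) (hϑ0 : 0 ≤ ϑ) (hϑ1 : ϑ < 1)
    (hζcont : ContinuousOn ζ (Set.Ici t₀))
    (hζ0 : ∀ t ∈ Set.Ici t₀, 0 ≤ ζ t)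
    (ha0 : ∀ t ∈ Set.Ici t₀, 0 ≤ a t)
    (hb0 : ∀ t ∈ Set.Ici t₀, 0 ≤ b t)
    (haloc : ∀ t ≥ t₀, IntegrableOn a (Set.Icc t₀ t))
    (hbloc : ∀ t ≥ t₀, IntegrableOn b (Set.Icc t₀ t))
    (hineq : ∀ t ≥ t₀, ζ t ≤ C + ∫ s in t₀..t, (a s * ζ s + b s * ζ s ^ ϑ)) :
    ∀ t ≥ t₀,
      ζ t ≤ (C ^ (1 - ϑ) * Real.exp ((1 - ϑ) * ∫ s in t₀..t, a s) +
        (1 - ϑ) * ∫ s in t₀..t, b s * Real.exp ((1 - ϑ) * ∫ r in s..t, a r)) ^ (1 / (1 - ϑ)) := by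
  intro T hT
  have hc : 0 < 1 - ϑ := sub_pos.2 hϑ1
  have hIcc : Set.Icc t₀ T ⊆ Set.Ici t₀ := Set.Icc_subset_Ici_self
  set E := Real.exp ((1 - ϑ) * ∫ s in t₀..T, a s)
  set I := ∫ s in t₀..T, b s * Real.exp ((1 - ϑ) * ∫ r in s..T, a r)
  have hbound : ∀ K > C, ζ T ^ (1 - ϑ) ≤ K ^ (1 - ϑ) * E + (1 - ϑ) * I := fun K hK ↦
    rpow_le_of_le_add_integral hT (hC.trans_lt hK) hϑ0 hϑ1.le (hζcont.mono hIcc)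
      (fun t ht ↦ hζ0 t (hIcc ht)) (fun t ht ↦ ha0 t (hIcc ht)) (fun t ht ↦ hb0 t (hIcc ht))
      ((intervalIntegrable_iff_integrableOn_Icc_of_le hT).2 (haloc T hT))
      ((intervalIntegrable_iff_integrableOn_Icc_of_le hT).2 (hbloc T hT))
      (fun t ht ↦ (hineq t ht.1).trans (by linarith))
  have hlim : Tendsto (fun K ↦ K ^ (1 - ϑ) * E + (1 - ϑ) * I) (𝓝[>] C)
      (𝓝 (C ^ (1 - ϑ) * E + (1 - ϑ) * I)) :=
    (((Real.continuousAt_rpow_const C _ (Or.inr hc.le)).tendsto.mono_left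
      nhdsWithin_le_nhds).mul_const E).add_const _
  have hC_bound := ge_of_tendsto hlim (eventually_nhdsWithin_of_forall hbound)
  rw [one_div, Real.le_rpow_inv_iff_of_pos (hζ0 T hT)
    ((Real.rpow_nonneg (hζ0 T hT) _).trans hC_bound) hc]
  exact hC_bound
end
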